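/- arXiv:1302.3738 — 3 statements merged into one kernel-verified Lean document; each statement's English description precedes it below -/
import Mathlib

section
/- Let α > 0. Then H_α′(-c_α) = 0, and for every x ∈ (-c_α, ∞) one has Re(H_α′(x + i v_α(x))) = -α v_α(x) · (∂F/∂y)(x + i v_α(x)) > 0; in particular H_α′(z) ≠ 0 for every z = x + i v_α(x) with x ∈ (-c_α, ∞). -/
/-!
Differentiating under the integral sign, `H_α′(z) = 1 - α ∫₀^∞ t e^{-t}/(z - t)² dt`.
At `z = -c_α` the integrand is real and the defining equation of `c_α` makes this vanish.
At `z = x + iy`, `Re (z - t)⁻² = 1/|z - t|² - 2y²/|z - t|⁴`, so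
`Re H_α′(z) = 1 - α F(z) + 2αy² ∫₀^∞ t e^{-t}/|z - t|⁴ dt`. On the curve `F = 1/α`, so only
`2αy² ∫₀^∞ t e^{-t}/|z - t|⁴ dt = -α y ∂F/∂y` remains, and it is positive.
-/

open MeasureTheory Set Filter

/-- `F(x+iy) = ∫₀^∞ t e^{-t}/((x-t)² + y²) dt`. -/
noncomputable def Fint (x y : ℝ) : ℝ :=
  ∫ t in Set.Ioi (0:ℝ), t * Real.exp (-t) / ((x - t)^2 + y^2)

/-- `H_α(z) = z + α + α ∫₀^∞ t e^{-t}/(z-t) dt`. -/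
noncomputable def Hfun (α : ℝ) (z : ℂ) : ℂ :=
  z + (α : ℂ) + (α : ℂ) * ∫ t in Set.Ioi (0:ℝ), ((t * Real.exp (-t) : ℝ) : ℂ) / (z - (t : ℂ))

lemma integrableOn_mul_exp_neg_Ioi : IntegrableOn (fun t : ℝ => t * Real.exp (-t)) (Ioi 0) := by
  refine (Real.GammaIntegral_convergent two_pos).congr_fun (fun t _ => ?_) measurableSet_Ioi
  norm_num [mul_comm]

lemma Complex.re_inv_sq (u : ℂ) :
    ((u ^ 2)⁻¹).re = 1 / normSq u - 2 * u.im ^ 2 / normSq u ^ 2 := by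
  rcases eq_or_ne u 0 with rfl | hu
  · simp
  have hN : normSq u ≠ 0 := normSq_eq_zero.not.2 hu
  rw [inv_re, map_pow, sq u, mul_re]
  field_simp
  rw [normSq_apply]
  ring

lemma hasDerivAt_div_sub {𝕜 : Type*} [NontriviallyNormedField 𝕜] (a : 𝕜) {w u : 𝕜}
    (hne : w - u ≠ 0) : HasDerivAt (fun w => a / (w - u)) (-(a / (w - u) ^ 2)) w :=
  ((hasDerivAt_const w a).div ((hasDerivAt_id' w).sub_const u) hne).congr_deriv (by ring)

section CauchyTransform

variable {f : ℝ → ℂ} {s : Set ℝ} {z : ℂ} {δ : ℝ}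

lemma half_le_norm_sub_of_mem_ball (hz : ∀ t ∈ s, δ ≤ ‖z - t‖) {w : ℂ}
    (hw : w ∈ Metric.ball z (δ / 2)) {t : ℝ} (ht : t ∈ s) : δ / 2 ≤ ‖w - t‖ := by
  have hzw : ‖z - w‖ < δ / 2 := by rwa [Metric.mem_ball, dist_comm, dist_eq_norm] at hw
  have := norm_sub_le_norm_sub_add_norm_sub z w t
  linarith [hz t ht]

lemma integrableOn_div_sub_pow (hs : MeasurableSet s) (hf : IntegrableOn f s) (hδ : 0 < δ)
    (hz : ∀ t ∈ s, δ ≤ ‖z - t‖) (n : ℕ) :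
    IntegrableOn (fun t : ℝ => f t / (z - t) ^ n) s := by
  refine Integrable.mono' (hf.norm.div_const (δ ^ n)) (hf.aestronglyMeasurable.mul
    (by fun_prop : Measurable fun t : ℝ => ((z - t) ^ n)⁻¹).aestronglyMeasurable)
    ((ae_restrict_iff' hs).2 (Eventually.of_forall fun t ht => ?_))
  rw [norm_div, norm_pow]
  gcongr
  exact hz t ht

lemma hasDerivAt_integral_div_sub (hs : MeasurableSet s) (hf : IntegrableOn f s) (hδ : 0 < δ)
    (hz : ∀ t ∈ s, δ ≤ ‖z - t‖) :
    HasDerivAt (fun w : ℂ => ∫ t in s, f t / (w - t)) (∫ t in s, -(f t / (z - t) ^ 2)) z := by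
  have hδ2 : 0 < δ / 2 := half_pos hδ
  have hball : ∀ w ∈ Metric.ball z (δ / 2), ∀ t ∈ s, δ / 2 ≤ ‖w - t‖ :=
    fun w hw t ht => half_le_norm_sub_of_mem_ball hz hw ht
  refine (hasDerivAt_integral_of_dominated_loc_of_deriv_le (μ := volume.restrict s)
    (F := fun w t => f t / (w - t)) (F' := fun w t => -(f t / (w - t) ^ 2))
    (bound := fun t => ‖f t‖ / (δ / 2) ^ 2)
    (Metric.ball_mem_nhds z hδ2) ?_ ?_ ?_ ?_ (hf.norm.div_const _) ?_).2
  · filter_upwards [Metric.ball_mem_nhds z hδ2] with w hw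
    simpa using (integrableOn_div_sub_pow hs hf hδ2 (hball w hw) 1).aestronglyMeasurable
  · simpa [IntegrableOn] using integrableOn_div_sub_pow hs hf hδ hz 1
  · exact (integrableOn_div_sub_pow hs hf hδ hz 2).aestronglyMeasurable.neg
  · refine (ae_restrict_iff' hs).2 (Eventually.of_forall fun t ht w hw => ?_)
    rw [norm_neg, norm_div, norm_pow]
    gcongr
    exact hball w hw t ht
  · refine (ae_restrict_iff' hs).2 (Eventually.of_forall fun t ht w hw => ?_)
    have hne : w - t ≠ 0 := norm_pos_iff.1 (hδ2.trans_le (hball w hw t ht))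
    exact hasDerivAt_div_sub (f t) hne

end CauchyTransform

section PoissonIntegral

variable {g : ℝ → ℝ} {s : Set ℝ}

lemma integrableOn_div_sub_sq_add_sq_pow (hg : IntegrableOn g s) (x : ℝ) {y : ℝ} (hy : y ≠ 0)
    (n : ℕ) : IntegrableOn (fun t => g t / ((x - t) ^ 2 + y ^ 2) ^ n) s := by
  refine Integrable.mono' (hg.norm.div_const ((y ^ 2) ^ n)) (hg.aestronglyMeasurable.mul
    (by fun_prop : Measurable fun t => (((x - t) ^ 2 + y ^ 2) ^ n)⁻¹).aestronglyMeasurable)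
    (Eventually.of_forall fun t => ?_)
  rw [norm_div, norm_pow, Real.norm_of_nonneg (by positivity : 0 ≤ (x - t) ^ 2 + y ^ 2)]
  gcongr
  nlinarith [sq_nonneg (x - t)]

lemma hasDerivAt_integral_div_sub_sq_add_sq (hg : IntegrableOn g s) (x : ℝ) {y : ℝ} (hy : 0 < y) :
    HasDerivAt (fun y => ∫ t in s, g t / ((x - t) ^ 2 + y ^ 2))
      (-2 * y * ∫ t in s, g t / ((x - t) ^ 2 + y ^ 2) ^ 2) y := by
  have hy2 : 0 < y / 2 := half_pos hy
  have hball : ∀ y' ∈ Metric.ball y (y / 2), y / 2 < y' ∧ y' < 3 * y / 2 := fun y' hy' => by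
    rw [Real.ball_eq_Ioo] at hy'
    exact ⟨by linarith [hy'.1], by linarith [hy'.2]⟩
  rw [← integral_const_mul]
  refine (hasDerivAt_integral_of_dominated_loc_of_deriv_le (μ := volume.restrict s)
    (F := fun y t => g t / ((x - t) ^ 2 + y ^ 2))
    (F' := fun y t => -2 * y * (g t / ((x - t) ^ 2 + y ^ 2) ^ 2))
    (bound := fun t => 3 * y * ‖g t‖ / (y / 2) ^ 4)
    (Metric.ball_mem_nhds y hy2) ?_ ?_ ?_ ?_ ?_ ?_).2
  · exact Eventually.of_forall fun y' => hg.aestronglyMeasurable.mul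
      (by fun_prop : Measurable fun t => ((x - t) ^ 2 + y' ^ 2)⁻¹).aestronglyMeasurable
  · simpa [IntegrableOn] using integrableOn_div_sub_sq_add_sq_pow hg x hy.ne' 1
  · exact ((integrableOn_div_sub_sq_add_sq_pow hg x hy.ne' 2).const_mul _).aestronglyMeasurable
  · refine Eventually.of_forall fun t y' hy' => ?_
    obtain ⟨hlo, hhi⟩ := hball y' hy'
    have hA : (y / 2) ^ 2 ≤ (x - t) ^ 2 + y' ^ 2 := by nlinarith [sq_nonneg (x - t)]
    rw [norm_mul, norm_div, norm_pow,
      Real.norm_of_nonneg (by positivity : 0 ≤ (x - t) ^ 2 + y' ^ 2), norm_mul, Real.norm_of_nonneg (by linarith : 0 ≤ y'), norm_neg, Real.norm_two]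
    calc 2 * y' * (‖g t‖ / ((x - t) ^ 2 + y' ^ 2) ^ 2)
        ≤ 3 * y * (‖g t‖ / ((y / 2) ^ 2) ^ 2) :=
          mul_le_mul (by linarith) (by gcongr) (by positivity) (by positivity)
      _ = 3 * y * ‖g t‖ / (y / 2) ^ 4 := by ring
  · exact (hg.norm.const_mul (3 * y)).div_const _
  · refine Eventually.of_forall fun t y' hy' => ?_
    have hA : 0 < (x - t) ^ 2 + y' ^ 2 := by nlinarith [sq_nonneg (x - t), (hball y' hy').1]
    exact ((hasDerivAt_const y' (g t)).div ((hasDerivAt_pow 2 y').const_add ((x - t) ^ 2))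
      hA.ne').congr_deriv (by simp; ring)

end PoissonIntegral

noncomputable def Fint2 (x y : ℝ) : ℝ :=
  ∫ t in Ioi (0:ℝ), t * Real.exp (-t) / ((x - t) ^ 2 + y ^ 2) ^ 2

lemma Fint2_pos (x : ℝ) {y : ℝ} (hy : 0 < y) : 0 < Fint2 x y := by
  have hint := integrableOn_div_sub_sq_add_sq_pow integrableOn_mul_exp_neg_Ioi x hy.ne' 2
  have hpos : ∀ t ∈ Ioi (0:ℝ), 0 < t * Real.exp (-t) / ((x - t) ^ 2 + y ^ 2) ^ 2 :=
    fun t (ht : 0 < t) => by positivity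
  rw [Fint2, setIntegral_pos_iff_support_of_nonneg_ae
    ((ae_restrict_iff' measurableSet_Ioi).2 (Eventually.of_forall fun t ht => (hpos t ht).le)) hint]
  refine lt_of_lt_of_le ?_ (measure_mono fun t ht => ⟨(hpos t ht).ne', ht⟩)
  simp

lemma hasDerivAt_Fint (x : ℝ) {y : ℝ} (hy : 0 < y) :
    HasDerivAt (Fint x) (-2 * y * Fint2 x y) y :=
  hasDerivAt_integral_div_sub_sq_add_sq integrableOn_mul_exp_neg_Ioi x hy

lemma hasDerivAt_Hfun (α : ℝ) {z : ℂ} {δ : ℝ} (hδ : 0 < δ) (hz : ∀ t ∈ Ioi (0:ℝ), δ ≤ ‖z - t‖) :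
    HasDerivAt (Hfun α)
      (1 + α * ∫ t in Ioi (0:ℝ), -(((t * Real.exp (-t) : ℝ) : ℂ) / (z - t) ^ 2)) z :=
  ((hasDerivAt_id z).add_const _).add ((hasDerivAt_integral_div_sub measurableSet_Ioi
    integrableOn_mul_exp_neg_Ioi.ofReal hδ hz).const_mul _)

lemma deriv_Hfun_ofReal_neg (α : ℝ) {c : ℝ} (hc : 0 < c) :
    deriv (Hfun α) ((-c : ℝ) : ℂ) = 1 - α * ∫ t in Ioi (0:ℝ), t * Real.exp (-t) / (c + t) ^ 2 := by
  have hz : ∀ t ∈ Ioi (0:ℝ), c ≤ ‖((-c : ℝ) : ℂ) - t‖ := fun t (ht : 0 < t) => by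
    rw [← Complex.ofReal_sub, Complex.norm_real, Real.norm_eq_abs, abs_of_neg (by linarith)]
    linarith
  have hpt : ∀ t : ℝ, -(((t * Real.exp (-t) : ℝ) : ℂ) / (((-c : ℝ) : ℂ) - t) ^ 2)
      = ((-(t * Real.exp (-t) / (c + t) ^ 2) : ℝ) : ℂ) := fun t => by push_cast; ring
  rw [(hasDerivAt_Hfun α hc hz).deriv, integral_congr_ae (Eventually.of_forall hpt),
    integral_complex_ofReal, integral_neg]
  push_cast
  ring

lemma re_ofReal_div_sub_sq (a x y t : ℝ) :
    ((a : ℂ) / (x + y * Complex.I - t) ^ 2).re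
      = a / ((x - t) ^ 2 + y ^ 2) - 2 * y ^ 2 * (a / ((x - t) ^ 2 + y ^ 2) ^ 2) := by
  have hu : (x : ℂ) + y * Complex.I - t = ((x - t : ℝ) : ℂ) + y * Complex.I := by push_cast; ring
  rw [div_eq_mul_inv, Complex.re_ofReal_mul, Complex.re_inv_sq, hu,
    Complex.normSq_add_mul_I]
  simp only [Complex.add_im, Complex.ofReal_im, Complex.mul_im, Complex.ofReal_re, Complex.I_re,
    Complex.I_im]
  ring

lemma re_deriv_Hfun (α x : ℝ) {y : ℝ} (hy : 0 < y) :
    (deriv (Hfun α) (x + y * Complex.I)).re = 1 - α * Fint x y + 2 * α * y ^ 2 * Fint2 x y := by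
  have hz : ∀ t ∈ Ioi (0:ℝ), y ≤ ‖x + y * Complex.I - t‖ := fun t _ => by
    simpa [abs_of_pos hy] using Complex.abs_im_le_norm (x + y * Complex.I - t)
  have hint :=
    integrableOn_div_sub_pow measurableSet_Ioi integrableOn_mul_exp_neg_Ioi.ofReal hy hz 2
  have hF := integrableOn_div_sub_sq_add_sq_pow integrableOn_mul_exp_neg_Ioi x hy.ne'
  have hre : (∫ t in Ioi (0:ℝ), ((t * Real.exp (-t) : ℝ) : ℂ) / (x + y * Complex.I - t) ^ 2).re
      = Fint x y - 2 * y ^ 2 * Fint2 x y := by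
    have h := integral_re hint
    simp only [RCLike.re_to_complex] at h
    -- `h` agrees with the goal only up to unfolding `RCLike ℂ` instances, so `rw [← h]` fails
    refine h.symm.trans <| (integral_congr_ae <| Eventually.of_forall fun t =>
      re_ofReal_div_sub_sq (t * Real.exp (-t)) x y t).trans ?_
    rw [integral_sub (by simpa [IntegrableOn] using hF 1) ((hF 2).const_mul _),
      integral_const_mul, Fint, Fint2]
  rw [(hasDerivAt_Hfun α hy hz).deriv, Complex.add_re, Complex.one_re, Complex.re_ofReal_mul,
    integral_neg, Complex.neg_re, hre]
  ring

theorem free_gamma_H_deriv_on_curve_general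
    (α : ℝ) (hα : 0 < α) (c : ℝ) (hc : 0 < c)
    (hceq : (∫ t in Set.Ioi (0:ℝ), t * Real.exp (-t) / (c + t)^2) = 1/α)
    (v : ℝ → ℝ)
    (hvpos : ∀ x, -c < x → 0 < v x)
    (hveq : ∀ x, -c < x → Fint x (v x) = 1/α) :
    deriv (Hfun α) ((-c : ℝ) : ℂ) = 0 ∧
    (∀ x : ℝ, -c < x →
      (deriv (Hfun α) ((x : ℂ) + (v x : ℝ) * Complex.I)).re
          = -α * v x * deriv (fun y => Fint x y) (v x) ∧
      0 < (deriv (Hfun α) ((x : ℂ) + (v x : ℝ) * Complex.I)).re ∧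
      deriv (Hfun α) ((x : ℂ) + (v x : ℝ) * Complex.I) ≠ 0) := by
  refine ⟨?_, fun x hx => ?_⟩
  · have hα' : (α : ℂ) ≠ 0 := Complex.ofReal_ne_zero.2 hα.ne'
    rw [deriv_Hfun_ofReal_neg α hc, hceq, Complex.ofReal_div, Complex.ofReal_one,
      mul_one_div_cancel hα', sub_self]
  have hy := hvpos x hx
  have hre : (deriv (Hfun α) (x + v x * Complex.I)).re = 2 * α * v x ^ 2 * Fint2 x (v x) := by
    rw [re_deriv_Hfun α x hy, hveq x hx]
    field_simp
    ring
  have hpos : 0 < (deriv (Hfun α) (x + v x * Complex.I)).re := hre ▸ by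
    have := Fint2_pos x hy
    positivity
  refine ⟨?_, hpos, fun h0 => ?_⟩
  · rw [hre, (hasDerivAt_Fint x hy).deriv]
    ring
  · rw [h0, Complex.zero_re] at hpos
    exact hpos.false

/-- `H_α′(-c_α) = 0`, and for `x > -c_α`,
`Re(H_α′(x + i v_α(x))) = -α v_α(x) ∂F/∂y(x + i v_α(x)) > 0`; in particular
`H_α′ ≠ 0` on the curve away from `-c_α`. -/
theorem free_gamma_H_deriv_on_curve
    (α : ℝ) (hα : 0 < α) (c : ℝ) (hc : 0 < c)
    (hceq : (∫ t in Set.Ioi (0:ℝ), t * Real.exp (-t) / (c + t)^2) = 1/α)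
    (v : ℝ → ℝ) (hv0 : ∀ x ≤ -c, v x = 0)
    (hvpos : ∀ x, -c < x → 0 < v x)
    (hveq : ∀ x, -c < x → Fint x (v x) = 1/α)
    (hvuniq : ∀ x, -c < x → ∀ y, 0 < y → Fint x y = 1/α → y = v x) :
    deriv (Hfun α) ((-c : ℝ) : ℂ) = 0 ∧
    (∀ x : ℝ, -c < x →
      (deriv (Hfun α) ((x : ℂ) + (v x : ℝ) * Complex.I)).re
          = -α * v x * deriv (fun y => Fint x y) (v x) ∧
      0 < (deriv (Hfun α) ((x : ℂ) + (v x : ℝ) * Complex.I)).re ∧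
      deriv (Hfun α) ((x : ℂ) + (v x : ℝ) * Complex.I) ≠ 0) :=
  free_gamma_H_deriv_on_curve_general α hα c hc hceq v hvpos hveq
end

section
/- Let α > 0. Then lim_{x→∞} v_α(x)/(x e^{-x}) = απ. -/
open MeasureTheory Set Filter

/-!
Write `ρ(x) = x e^{-x}`. As `y → 0` the Poisson kernel `y / ((x - t)² + y²)` tends to `π δ_x`, so
`F(x + iy) ≈ π ρ(x) / y` whenever `y` is small compared with the scale on which `t e^{-t}` varies
near `t = x`. Taking `y = λ ρ(x)`, which tends to `0`, gives `F(x + iλρ(x)) → π / λ`. Since `F` is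
decreasing in `y > 0`, comparing `F(x + i v(x)) = 1/α` with `F(x + iλρ(x))` for `λ` slightly below
and slightly above `απ` squeezes `v(x) / ρ(x)` to `απ`.
-/

open Real Topology

lemma mul_exp_neg_le (t : ℝ) : t * exp (-t) ≤ 2 * exp (-(1 / 2) * t) := by
  have h : t ≤ 2 * exp (t / 2) := by linarith [add_one_le_exp (t / 2), exp_pos (t / 2)]
  calc t * exp (-t) ≤ 2 * exp (t / 2) * exp (-t) := by gcongr
    _ = 2 * exp (-(1 / 2) * t) := by rw [mul_assoc, ← exp_add]; ring_nf

lemma integrableOn_mul_exp_neg : IntegrableOn (fun t : ℝ => t * exp (-t)) (Ioi 0) :=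
  (GammaIntegral_convergent two_pos).congr_fun (fun t _ => by norm_num [mul_comm])
    measurableSet_Ioi

lemma integrableOn_Fint_integrand (x : ℝ) {y : ℝ} (hy : y ≠ 0) :
    IntegrableOn (fun t : ℝ => t * exp (-t) / ((x - t) ^ 2 + y ^ 2)) (Ioi 0) := by
  refine (integrableOn_mul_exp_neg.div_const (y ^ 2)).mono'
    (Measurable.aestronglyMeasurable (by fun_prop)) ?_
  filter_upwards [ae_restrict_mem measurableSet_Ioi] with t (ht : 0 < t)
  rw [norm_of_nonneg (by positivity)]
  gcongr
  exact le_add_of_nonneg_left (sq_nonneg _)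

lemma antitoneOn_Fint (x : ℝ) : AntitoneOn (Fint x) (Ioi 0) := by
  intro y₁ (hy₁ : 0 < y₁) y₂ (hy₂ : 0 < y₂) h
  refine setIntegral_mono_on (integrableOn_Fint_integrand x hy₂.ne')
    (integrableOn_Fint_integrand x hy₁.ne') measurableSet_Ioi fun t (ht : 0 < t) => ?_
  gcongr

lemma inv_sub_sq_add_sq_eq (x y t : ℝ) (hy : y ≠ 0) :
    ((x - t) ^ 2 + y ^ 2)⁻¹ = (y ^ 2)⁻¹ * (1 + ((t - x) / y) ^ 2)⁻¹ := by
  field_simp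
  ring

lemma integrable_inv_sub_sq_add_sq (x : ℝ) {y : ℝ} (hy : y ≠ 0) :
    Integrable fun t : ℝ => ((x - t) ^ 2 + y ^ 2)⁻¹ := by
  simp_rw [inv_sub_sq_add_sq_eq x y _ hy]
  exact ((integrable_inv_one_add_sq.comp_div hy).comp_sub_right x).const_mul _

lemma integral_inv_sub_sq_add_sq (x : ℝ) {y : ℝ} (hy : 0 < y) :
    ∫ t, ((x - t) ^ 2 + y ^ 2)⁻¹ = π / y := by
  simp_rw [inv_sub_sq_add_sq_eq x y _ hy.ne', integral_const_mul]
  rw [integral_sub_right_eq_self (fun t => (1 + (t / y) ^ 2)⁻¹) x,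
    Measure.integral_comp_div (fun s => (1 + s ^ 2)⁻¹) y, integral_univ_inv_one_add_sq,
    abs_of_pos hy, smul_eq_mul]
  field_simp

lemma integral_Ioo_inv_sub_sq_add_sq (x : ℝ) {y δ : ℝ} (hy : y ≠ 0) (hδ : 0 ≤ δ) :
    ∫ t in Ioo (x - δ) (x + δ), ((x - t) ^ 2 + y ^ 2)⁻¹ = 2 / y * arctan (δ / y) := by
  rw [← integral_Ioc_eq_integral_Ioo, ← intervalIntegral.integral_of_le (by linarith)]
  have hshift := intervalIntegral.integral_comp_sub_right (fun s => (y ^ 2 + s ^ 2)⁻¹) x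
    (a := x - δ) (b := x + δ)
  simp only [add_sub_cancel_left, sub_sub_cancel_left] at hshift
  simp_rw [sub_sq_comm x, add_comm _ (y ^ 2), hshift, integral_inv_sq_add_sq hy, neg_div,
    arctan_neg]
  ring

lemma le_Fint (x : ℝ) {y δ : ℝ} (hy : 0 < y) (hδ : 0 < δ) (hδx : δ < x) :
    (x - δ) * exp (-(x + δ)) * (2 / y * arctan (δ / y)) ≤ Fint x y := by
  have hsub : Ioo (x - δ) (x + δ) ⊆ Ioi 0 := fun t ht => show 0 < t by linarith [ht.1]
  calc (x - δ) * exp (-(x + δ)) * (2 / y * arctan (δ / y))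
      = ∫ t in Ioo (x - δ) (x + δ), (x - δ) * exp (-(x + δ)) * ((x - t) ^ 2 + y ^ 2)⁻¹ := by
        rw [integral_const_mul, integral_Ioo_inv_sub_sq_add_sq x hy.ne' hδ.le]
    _ ≤ ∫ t in Ioo (x - δ) (x + δ), t * exp (-t) / ((x - t) ^ 2 + y ^ 2) := by
        refine setIntegral_mono_on ((integrable_inv_sub_sq_add_sq x hy.ne').integrableOn.const_mul _)
          ((integrableOn_Fint_integrand x hy.ne').mono_set hsub) measurableSet_Ioo
          fun t ⟨ht₁, ht₂⟩ => ?_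
        rw [div_eq_mul_inv]
        have : 0 ≤ x - δ := by linarith
        gcongr
        linarith
    _ ≤ Fint x y := by
        refine setIntegral_mono_set (integrableOn_Fint_integrand x hy.ne') ?_ hsub.eventuallyLE
        filter_upwards [ae_restrict_mem measurableSet_Ioi] with t (ht : 0 < t)
        positivity

/-- Near `t = x` the kernel carries the mass; for `t ≤ x / 2` it is at most `4 / x²`, and for
`t > x / 2` away from `x` the weight `t e^{-t}` is exponentially small. -/
lemma Fint_integrand_le {x y δ t : ℝ} (hx : 0 < x) (hδ : 0 < δ) (ht : 0 < t) :
    t * exp (-t) / ((x - t) ^ 2 + y ^ 2) ≤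
      (x + δ) * exp (-(x - δ)) * ((x - t) ^ 2 + y ^ 2)⁻¹ + 4 / x ^ 2 * (t * exp (-t)) +
        2 / δ ^ 2 * exp (-(x / 8)) * exp (-(1 / 4) * t) := by
  have hpos₁ : 0 ≤ (x + δ) * exp (-(x - δ)) * ((x - t) ^ 2 + y ^ 2)⁻¹ := by positivity
  have hpos₂ : 0 ≤ 4 / x ^ 2 * (t * exp (-t)) := by positivity
  have hpos₃ : 0 ≤ 2 / δ ^ 2 * exp (-(x / 8)) * exp (-(1 / 4) * t) := by positivity
  rcases lt_or_ge |x - t| δ with hnear | hfar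
  · obtain ⟨h₁, h₂⟩ := abs_sub_lt_iff.1 hnear
    have : t * exp (-t) / ((x - t) ^ 2 + y ^ 2) ≤
        (x + δ) * exp (-(x - δ)) * ((x - t) ^ 2 + y ^ 2)⁻¹ := by
      rw [div_eq_mul_inv]
      gcongr
      · linarith
      · linarith
    linarith
  rcases le_or_gt t (x / 2) with hleft | hright
  · have : t * exp (-t) / ((x - t) ^ 2 + y ^ 2) ≤ 4 / x ^ 2 * (t * exp (-t)) := by
      rw [div_eq_inv_mul]
      gcongr ?_ * _
      rw [show 4 / x ^ 2 = ((x / 2) ^ 2)⁻¹ by ring]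
      gcongr
      nlinarith [sq_nonneg y]
    linarith
  · have hsq : δ ^ 2 ≤ (x - t) ^ 2 + y ^ 2 := by
      nlinarith [sq_abs (x - t), sq_nonneg y, pow_le_pow_left₀ hδ.le hfar 2]
    have hexp : exp (-(1 / 2) * t) ≤ exp (-(x / 8)) * exp (-(1 / 4) * t) := by
      rw [← exp_add]
      gcongr
      linarith
    have : t * exp (-t) / ((x - t) ^ 2 + y ^ 2) ≤
        2 / δ ^ 2 * exp (-(x / 8)) * exp (-(1 / 4) * t) :=
      calc t * exp (-t) / ((x - t) ^ 2 + y ^ 2) ≤ 2 * exp (-(1 / 2) * t) / δ ^ 2 :=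
            div_le_div₀ (by positivity) (mul_exp_neg_le t) (by positivity) hsq
        _ ≤ 2 * (exp (-(x / 8)) * exp (-(1 / 4) * t)) / δ ^ 2 := by gcongr
        _ = 2 / δ ^ 2 * exp (-(x / 8)) * exp (-(1 / 4) * t) := by ring
    linarith

lemma Fint_le {x y δ : ℝ} (hx : 0 < x) (hy : 0 < y) (hδ : 0 < δ) :
    Fint x y ≤ (x + δ) * exp (-(x - δ)) * (π / y) + 4 / x ^ 2 * (∫ t in Ioi 0, t * exp (-t)) +
      8 / δ ^ 2 * exp (-(x / 8)) := by
  set M := (x + δ) * exp (-(x - δ))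
  set K := 2 / δ ^ 2 * exp (-(x / 8))
  have hpoisson : IntegrableOn (fun t => M * ((x - t) ^ 2 + y ^ 2)⁻¹) (Ioi 0) :=
    (integrable_inv_sub_sq_add_sq x hy.ne').integrableOn.const_mul M
  have hgamma : IntegrableOn (fun t => 4 / x ^ 2 * (t * exp (-t))) (Ioi 0) :=
    integrableOn_mul_exp_neg.const_mul _
  have htail : IntegrableOn (fun t => K * exp (-(1 / 4) * t)) (Ioi 0) :=
    (exp_neg_integrableOn_Ioi 0 (by norm_num)).const_mul K
  have hnear : IntegrableOn (fun t => M * ((x - t) ^ 2 + y ^ 2)⁻¹ + 4 / x ^ 2 * (t * exp (-t)))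
      (Ioi 0) := hpoisson.add hgamma
  calc Fint x y ≤ ∫ t in Ioi 0, (M * ((x - t) ^ 2 + y ^ 2)⁻¹ + 4 / x ^ 2 * (t * exp (-t)) +
        K * exp (-(1 / 4) * t)) :=
        setIntegral_mono_on (integrableOn_Fint_integrand x hy.ne')
          (hnear.add htail) measurableSet_Ioi
          fun t ht => Fint_integrand_le hx hδ ht
    _ = M * (∫ t in Ioi 0, ((x - t) ^ 2 + y ^ 2)⁻¹) + 4 / x ^ 2 * (∫ t in Ioi 0, t * exp (-t)) +
        K * 4 := by
        rw [integral_add hnear htail, integral_add hpoisson hgamma,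
          integral_const_mul, integral_const_mul, integral_const_mul,
          integral_exp_mul_Ioi (by norm_num)]
        norm_num
    _ ≤ M * (π / y) + 4 / x ^ 2 * (∫ t in Ioi 0, t * exp (-t)) + K * 4 := by
        rw [← integral_inv_sub_sq_add_sq x hy]
        gcongr
        · exact Eventually.of_forall fun t => by positivity
        · exact integrable_inv_sub_sq_add_sq x hy.ne'
        · exact Measure.restrict_le_self
    _ = _ := by ring

lemma tendsto_mul_exp_neg_nhdsGT : Tendsto (fun x : ℝ => x * exp (-x)) atTop (𝓝[>] 0) :=
  tendsto_nhdsWithin_iff.2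
    ⟨by simpa using tendsto_pow_mul_exp_neg_atTop_nhds_zero 1,
      (eventually_gt_atTop 0).mono fun x hx => mul_pos hx (exp_pos _)⟩

lemma tendsto_arctan_div_mul_exp_neg {δ l : ℝ} (hδ : 0 < δ) (hl : 0 < l) :
    Tendsto (fun x => arctan (δ / (l * (x * exp (-x))))) atTop (𝓝 (π / 2)) := by
  have h := tendsto_mul_exp_neg_nhdsGT.inv_tendsto_nhdsGT_zero.const_mul_atTop (div_pos hδ hl)
  refine tendsto_nhds_of_tendsto_nhdsWithin (tendsto_arctan_atTop.comp (h.congr fun x => ?_))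
  simp only [Pi.inv_apply]
  field_simp

lemma tendsto_one_add_div_atTop (δ : ℝ) : Tendsto (fun x : ℝ => 1 + δ / x) atTop (𝓝 1) := by
  simpa using (tendsto_const_nhds (x := (1 : ℝ))).add
    ((tendsto_const_nhds (x := δ)).div_atTop tendsto_id)

lemma tendsto_Fint_lower_bound {δ l : ℝ} (hδ : 0 < δ) (hl : 0 < l) :
    Tendsto (fun x => (x - δ) * exp (-(x + δ)) *
      (2 / (l * (x * exp (-x))) * arctan (δ / (l * (x * exp (-x))))))
      atTop (𝓝 (exp (-δ) * (π / l))) := by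
  have h := (tendsto_one_add_div_atTop (-δ)).mul
    ((tendsto_arctan_div_mul_exp_neg hδ hl).const_mul (2 / l * exp (-δ)))
  rw [show exp (-δ) * (π / l) = 1 * (2 / l * exp (-δ) * (π / 2)) by ring]
  refine h.congr' ((eventually_gt_atTop 0).mono fun x hx => ?_)
  dsimp only
  rw [show -(x + δ) = -x + -δ by ring, exp_add]
  field_simp
  ring

lemma tendsto_Fint_upper_bound (C : ℝ) {δ l : ℝ} (hl : 0 < l) :
    Tendsto (fun x => (x + δ) * exp (-(x - δ)) * (π / (l * (x * exp (-x)))) + 4 / x ^ 2 * C +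
      8 / δ ^ 2 * exp (-(x / 8))) atTop (𝓝 (exp δ * (π / l))) := by
  have hmain := (tendsto_one_add_div_atTop δ).mul_const (exp δ * (π / l))
  have hgamma : Tendsto (fun x : ℝ => 4 / x ^ 2 * C) atTop (𝓝 0) := by
    simpa using (tendsto_const_nhds.div_atTop (tendsto_pow_atTop two_ne_zero)).mul_const C
  have htail : Tendsto (fun x : ℝ => 8 / δ ^ 2 * exp (-(x / 8))) atTop (𝓝 0) := by
    simpa using (tendsto_exp_neg_atTop_nhds_zero.comp
      (tendsto_id.atTop_div_const (by norm_num : (0 : ℝ) < 8))).const_mul (8 / δ ^ 2)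
  rw [show exp δ * (π / l) = 1 * (exp δ * (π / l)) + 0 + 0 by ring]
  refine ((hmain.add hgamma).add htail).congr' ((eventually_gt_atTop 0).mono fun x hx => ?_)
  dsimp only
  rw [show -(x - δ) = -x + δ by ring, exp_add]
  field_simp

theorem tendsto_Fint_mul_exp_neg {l : ℝ} (hl : 0 < l) :
    Tendsto (fun x => Fint x (l * (x * exp (-x)))) atTop (𝓝 (π / l)) := by
  refine tendsto_order.2 ⟨fun a ha => ?_, fun b hb => ?_⟩
  · obtain ⟨δ, hδ, haδ⟩ := (((by fun_prop : Continuous fun δ => exp (-δ) * (π / l)).tendsto 0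
      ).eventually_const_lt (by simpa using ha)).exists_gt
    filter_upwards [(tendsto_Fint_lower_bound hδ hl).eventually_const_lt haδ,
      eventually_gt_atTop δ] with x hlower hx
    have hx₀ : 0 < x := hδ.trans hx
    exact hlower.trans_le (le_Fint x (by positivity) hδ hx)
  · obtain ⟨δ, hδ, hδb⟩ := (((by fun_prop : Continuous fun δ => exp δ * (π / l)).tendsto 0
      ).eventually_lt_const (by simpa using hb)).exists_gt
    filter_upwards [(tendsto_Fint_upper_bound (∫ t in Ioi 0, t * exp (-t)) hl).eventually_lt_const
      hδb, eventually_gt_atTop 0] with x hupper hx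
    exact (Fint_le hx (by positivity) hδ).trans_lt hupper

theorem free_gamma_v_asymptotics_general
    (α : ℝ) (hα : 0 < α) (c : ℝ)
    (v : ℝ → ℝ)
    (hvpos : ∀ x, -c < x → 0 < v x)
    (hveq : ∀ x, -c < x → Fint x (v x) = 1/α) :
    Filter.Tendsto (fun x => v x / (x * Real.exp (-x))) Filter.atTop
      (nhds (α * Real.pi)) := by
  have hv : ∀ᶠ x in atTop, 0 < x ∧ 0 < v x ∧ Fint x (v x) = 1 / α :=
    (eventually_gt_atTop (max 0 (-c))).mono fun x hx =>
      ⟨(le_max_left _ _).trans_lt hx, hvpos x ((le_max_right _ _).trans_lt hx),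
        hveq x ((le_max_right _ _).trans_lt hx)⟩
  refine tendsto_order.2 ⟨fun a ha => ?_, fun b hb => ?_⟩
  · obtain ⟨l, hal, hl⟩ := exists_between (max_lt ha (by positivity) : max a 0 < α * π)
    have hl₀ : 0 < l := (le_max_right a 0).trans_lt hal
    have hlim : 1 / α < π / l := by rw [div_lt_div_iff₀ hα hl₀]; linarith
    filter_upwards [hv, (tendsto_Fint_mul_exp_neg hl₀).eventually_const_lt hlim]
      with x ⟨hx, hvx, hFv⟩ hF
    have hlv : l * (x * exp (-x)) < v x :=
      (antitoneOn_Fint x).reflect_lt hvx (by positivity : 0 < l * (x * exp (-x))) (hFv ▸ hF)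
    exact ((le_max_left a 0).trans_lt hal).trans ((lt_div_iff₀ (by positivity)).2 hlv)
  · obtain ⟨l, hal, hlb⟩ := exists_between hb
    have hl₀ : 0 < l := (by positivity : 0 < α * π).trans hal
    have hlim : π / l < 1 / α := by rw [div_lt_div_iff₀ hl₀ hα]; linarith
    filter_upwards [hv, (tendsto_Fint_mul_exp_neg hl₀).eventually_lt_const hlim]
      with x ⟨hx, hvx, hFv⟩ hF
    have hvl : v x < l * (x * exp (-x)) :=
      (antitoneOn_Fint x).reflect_lt (by positivity : 0 < l * (x * exp (-x))) hvx (hFv ▸ hF)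
    exact ((div_lt_iff₀ (by positivity)).2 hvl).trans hlb

/-- `lim_{x→∞} v_α(x)/(x e^{-x}) = απ`. -/
theorem free_gamma_v_asymptotics
    (α : ℝ) (hα : 0 < α) (c : ℝ) (hc : 0 < c)
    (hceq : (∫ t in Set.Ioi (0:ℝ), t * Real.exp (-t) / (c + t)^2) = 1/α)
    (v : ℝ → ℝ) (hv0 : ∀ x ≤ -c, v x = 0)
    (hvpos : ∀ x, -c < x → 0 < v x)
    (hveq : ∀ x, -c < x → Fint x (v x) = 1/α)
    (hvuniq : ∀ x, -c < x → ∀ y, 0 < y → Fint x y = 1/α → y = v x) :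
    Filter.Tendsto (fun x => v x / (x * Real.exp (-x))) Filter.atTop
      (nhds (α * Real.pi)) :=
  free_gamma_v_asymptotics_general α hα c v hvpos hveq
end

section
/- Both α ↦ c_α and α ↦ s_α are real-analytic functions on (0,∞), with dc_α/dα = c_α(1 + c_α)/(α(α − 2c_α − c_α²)) and ds_α/dα = c_α(α + 1)/(α(1 + c_α)). In particular s_α is a strictly increasing function of α; moreover lim_{α→0} s_α = 0 and lim_{α→∞} s_α = ∞. -/
/-!
Write `G(x) = ∫₀^∞ t e^{-t}/(x+t)² dt` (`stieltjesSq`), so that `c_α` solves `G(c_α) = 1/α`.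
Integrating `e^{-t}/(x+t)ⁿ` by parts expresses `∫₀^∞ t e^{-t}/(x+t)^k dt` for `k = 1, 3` through
`G(x)`. For `k = 1` this evaluates `H_α(-c_α) = c_α(α - c_α)/(1 + c_α)`; for `k = 3` it turns
`G' = -2∫₀^∞ t e^{-t}/(x+t)³ dt` into the linear equation `x(1+x)G' = x(2+x)G - 1`, and the
negativity of `G'` into `2c_α + c_α² < α`.

`G` extends holomorphically to `Re z > 0`, hence is real-analytic, and `G' ≠ 0`; the analytic
inverse function theorem applied to `1/G` makes `c` analytic, and implicit differentiation gives
both derivatives, the one of `s` being positive. Finally `4xt ≤ (x+t)²` gives `c_α ≤ α/4`, hence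
`0 ≤ s_α ≤ α²/4`, while `c_α ≥ 1` for large `α` (as `G` decreases) gives `s_α ≥ 3α/8`.
-/

open MeasureTheory Set Filter

open Topology Real

theorem AnalyticAt.of_local_left_inverse {𝕜 : Type*} [NontriviallyNormedField 𝕜] [CompleteSpace 𝕜]
    [CharZero 𝕜] {f g : 𝕜 → 𝕜} {a : 𝕜} {s : Set 𝕜}
    (hf : AnalyticAt 𝕜 f (g a)) (hf' : deriv f (g a) ≠ 0) (hs : s ∈ 𝓝 (g a)) (hinj : InjOn f s)
    (hgs : ∀ᶠ y in 𝓝 a, g y ∈ s) (hfg : ∀ᶠ y in 𝓝 a, f (g y) = y) : AnalyticAt 𝕜 g a := by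
  have hfa : f (g a) = a := hfg.self_of_nhds
  set r := hf.hasStrictDerivAt.localInverse _ _ _ hf'
  have hr : AnalyticAt 𝕜 r a := hfa ▸ hf.analyticAt_localInverse hf'
  have hra : r a = g a := by
    have : r (f (g a)) = g a := HasStrictFDerivAt.localInverse_apply_image ..
    rwa [hfa] at this
  have hrs : ∀ᶠ y in 𝓝 a, r y ∈ s := hr.continuousAt (hra ▸ hs)
  have hfr : ∀ᶠ y in 𝓝 a, f (r y) = y := hfa ▸ hf.hasStrictDerivAt.eventually_right_inverse hf'
  refine hr.congr ?_
  filter_upwards [hrs, hgs, hfr, hfg] with y hry hgy hfry hfgy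
  exact hinj hry hgy (hfry.trans hfgy.symm)

lemma hasDerivAt_const_div_add_pow {𝕜 : Type*} [NontriviallyNormedField 𝕜] (a t : 𝕜) (n : ℕ)
    {u : 𝕜} (hu : u + t ≠ 0) :
    HasDerivAt (fun u => a / (u + t) ^ n) (-(n * a / (u + t) ^ (n + 1))) u := by
  have h := (hasDerivAt_const u a).div (((hasDerivAt_id u).add_const t).fun_pow n)
    (pow_ne_zero n hu)
  refine h.congr_deriv ?_
  rcases n with _ | k
  · simp
  · simp only [id, Nat.cast_add, Nat.cast_one, add_tsub_cancel_right]
    field_simp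
    ring

theorem hasDerivAt_integral_div_add_pow {w : ℝ → ℂ} (hw : IntegrableOn w (Ioi 0)) (n : ℕ)
    {z : ℂ} (hz : 0 < z.re) :
    HasDerivAt (fun z : ℂ => ∫ t in Ioi 0, w t / (z + t) ^ n)
      (∫ t in Ioi 0, -(n * w t / (z + t) ^ (n + 1))) z := by
  set ε := z.re / 2 with hε_def
  have hε : 0 < ε := half_pos hz
  have hnorm : ∀ u ∈ Metric.ball z ε, ∀ t : ℝ, 0 < t → ε ≤ ‖u + t‖ := fun u hu t ht => by
    rw [Metric.mem_ball, Complex.dist_eq] at hu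
    have hre := (abs_lt.1 ((Complex.abs_re_le_norm (u - z)).trans_lt hu)).1
    have := Complex.re_le_norm (u + t)
    simp only [Complex.sub_re, Complex.add_re, Complex.ofReal_re] at hre this
    linarith [hε_def]
  have hne : ∀ u ∈ Metric.ball z ε, ∀ t : ℝ, 0 < t → u + t ≠ 0 := fun u hu t ht h => by
    have := hnorm u hu t ht
    rw [h, norm_zero] at this
    linarith
  have hmeas : ∀ u ∈ Metric.ball z ε, ∀ k : ℕ,
      AEStronglyMeasurable (fun t : ℝ => w t / (u + t) ^ k) (volume.restrict (Ioi 0)) :=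
    fun u hu k => hw.aestronglyMeasurable.mul <|
      (ContinuousOn.inv₀ (by fun_prop) fun t ht => pow_ne_zero _ (hne u hu t ht))
        |>.aestronglyMeasurable measurableSet_Ioi
  have hz_mem : z ∈ Metric.ball z ε := Metric.mem_ball_self hε
  refine (hasDerivAt_integral_of_dominated_loc_of_deriv_le (Metric.ball_mem_nhds z hε)
    (F := fun u t => w t / (u + t) ^ n) (F' := fun u t => -(n * w t / (u + t) ^ (n + 1)))
    (bound := fun t => n / ε ^ (n + 1) * ‖w t‖) ?_ ?_ ?_ ?_ ?_ ?_).2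
  · filter_upwards [Metric.ball_mem_nhds z hε] with u hu using hmeas u hu n
  · refine Integrable.mono' (hw.norm.const_mul (ε ^ n)⁻¹) (hmeas z hz_mem n) ?_
    filter_upwards [ae_restrict_mem measurableSet_Ioi] with t (ht : 0 < t)
    rw [norm_div, norm_pow, div_eq_inv_mul]
    gcongr
    exact hnorm z hz_mem t ht
  · simpa only [mul_div_assoc, Pi.neg_def] using ((hmeas z hz_mem (n + 1)).const_mul (n : ℂ)).neg
  · filter_upwards [ae_restrict_mem measurableSet_Ioi] with t (ht : 0 < t) u hu
    rw [norm_neg, norm_div, norm_mul, norm_pow, Complex.norm_natCast, mul_div_right_comm]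
    gcongr
    exact hnorm u hu t ht
  · exact hw.norm.const_mul _
  · filter_upwards [ae_restrict_mem measurableSet_Ioi] with t (ht : 0 < t) u hu
    exact hasDerivAt_const_div_add_pow (w t) t n (hne u hu t ht)

noncomputable def stieltjesSq (x : ℝ) : ℝ := ∫ t in Ioi 0, t * exp (-t) / (x + t) ^ 2

lemma integrableOn_pow_mul_exp_neg_div_add_pow {x : ℝ} (hx : 0 < x) {m n : ℕ} (hmn : m ≤ n) :
    IntegrableOn (fun t => t ^ m * exp (-t) / (x + t) ^ n) (Ioi 0) := by
  refine Integrable.mono' ((integrableOn_exp_neg_Ioi 0).const_mul (x ^ (n - m))⁻¹) ?_ ?_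
  · exact (ContinuousOn.div (by fun_prop) (by fun_prop) fun t (ht : 0 < t) => by positivity)
      |>.aestronglyMeasurable measurableSet_Ioi
  · filter_upwards [ae_restrict_mem measurableSet_Ioi] with t (ht : 0 < t)
    have key : t ^ m * x ^ (n - m) ≤ (x + t) ^ n :=
      calc t ^ m * x ^ (n - m) ≤ (x + t) ^ m * (x + t) ^ (n - m) := by
            gcongr <;> linarith
        _ = (x + t) ^ n := by rw [← pow_add, Nat.add_sub_cancel' hmn]
    rw [norm_of_nonneg (by positivity), mul_div_right_comm]
    gcongr
    rw [div_le_iff₀ (by positivity), ← div_eq_inv_mul, le_div_iff₀ (by positivity)]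
    exact key

lemma integrableOn_exp_neg_div_add_pow {x : ℝ} (hx : 0 < x) (n : ℕ) :
    IntegrableOn (fun t => exp (-t) / (x + t) ^ n) (Ioi 0) := by
  simpa using integrableOn_pow_mul_exp_neg_div_add_pow hx (Nat.zero_le n)

lemma integrableOn_mul_exp_neg_div_add_pow {x : ℝ} (hx : 0 < x) {n : ℕ} (hn : 1 ≤ n) :
    IntegrableOn (fun t => t * exp (-t) / (x + t) ^ n) (Ioi 0) := by
  simpa using integrableOn_pow_mul_exp_neg_div_add_pow hx hn

lemma integral_exp_neg_div_add_pow_add {x : ℝ} (hx : 0 < x) (n : ℕ) :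
    (∫ t in Ioi 0, exp (-t) / (x + t) ^ (n + 1)) +
      (n + 1) * ∫ t in Ioi 0, exp (-t) / (x + t) ^ (n + 2) = (x ^ (n + 1))⁻¹ := by
  have hint := integrableOn_exp_neg_div_add_pow hx
  have hderiv : ∀ t ∈ Ioi (0 : ℝ), HasDerivAt (fun t => -(exp (-t) / (x + t) ^ (n + 1)))
      (exp (-t) / (x + t) ^ (n + 1) + (n + 1) * exp (-t) / (x + t) ^ (n + 2)) t := by
    intro t (ht : 0 < t)
    have hxt : x + t ≠ 0 := by positivity
    have h := ((hasDerivAt_neg t).exp.div (((hasDerivAt_id t).const_add x).fun_pow (n + 1))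
      (pow_ne_zero _ hxt)).neg
    refine h.congr_deriv ?_
    simp only [id, Nat.cast_add, Nat.cast_one, add_tsub_cancel_right]
    field_simp
    ring
  have hlim : Tendsto (fun t => -(exp (-t) / (x + t) ^ (n + 1))) atTop (𝓝 0) := by
    have h := tendsto_exp_neg_atTop_nhds_zero.div_atTop <| (tendsto_pow_atTop n.succ_ne_zero).comp
      (tendsto_atTop_add_const_left _ x tendsto_id)
    simpa using h.neg
  have hcont : ContinuousWithinAt (fun t => -(exp (-t) / (x + t) ^ (n + 1))) (Ici 0) 0 :=
    (ContinuousAt.div (by fun_prop) (by fun_prop) (by positivity)).neg.continuousWithinAt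
  have hint' : IntegrableOn (fun t => (n + 1) * exp (-t) / (x + t) ^ (n + 2)) (Ioi 0) := by
    simp_rw [mul_div_assoc]
    exact (hint (n + 2)).const_mul _
  have hftc := integral_Ioi_of_hasDerivAt_of_tendsto hcont hderiv ((hint (n + 1)).add hint') hlim
  rw [integral_add (hint (n + 1)) hint'] at hftc
  simpa [mul_div_assoc, integral_const_mul] using hftc

lemma integral_mul_exp_neg_div_add_pow_succ {x : ℝ} (hx : 0 < x) (n : ℕ) :
    ∫ t in Ioi 0, t * exp (-t) / (x + t) ^ (n + 1) =
      (∫ t in Ioi 0, exp (-t) / (x + t) ^ n) - x * ∫ t in Ioi 0, exp (-t) / (x + t) ^ (n + 1) := by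
  rw [← integral_const_mul, ← integral_sub (integrableOn_exp_neg_div_add_pow hx n)
    ((integrableOn_exp_neg_div_add_pow hx (n + 1)).const_mul x)]
  refine setIntegral_congr_fun measurableSet_Ioi fun t (ht : 0 < t) => ?_
  have hxt : x + t ≠ 0 := by positivity
  field_simp
  ring

lemma integral_exp_neg_div_add {x : ℝ} (hx : 0 < x) :
    ∫ t in Ioi 0, exp (-t) / (x + t) = (1 + stieltjesSq x) / (1 + x) := by
  have hibp := integral_exp_neg_div_add_pow_add hx 0
  have hG := integral_mul_exp_neg_div_add_pow_succ hx 1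
  simp only [pow_one, Nat.cast_zero, zero_add, one_mul] at hibp hG
  rw [eq_div_iff (by positivity), stieltjesSq, hG]
  field_simp at hibp
  linear_combination hibp

lemma integral_mul_exp_neg_div_add {x : ℝ} (hx : 0 < x) :
    ∫ t in Ioi 0, t * exp (-t) / (x + t) = (1 - x * stieltjesSq x) / (1 + x) := by
  have h := integral_mul_exp_neg_div_add_pow_succ hx 0
  simp only [pow_zero, div_one, zero_add, pow_one, integral_exp_neg_Ioi_zero] at h
  rw [h, integral_exp_neg_div_add hx]
  field_simp
  ring

lemma integral_mul_exp_neg_div_add_pow_three {x : ℝ} (hx : 0 < x) :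
    ∫ t in Ioi 0, t * exp (-t) / (x + t) ^ 3 =
      (1 - x * (2 + x) * stieltjesSq x) / (2 * x * (1 + x)) := by
  have hibp₁ := integral_exp_neg_div_add_pow_add hx 0
  have hibp₂ := integral_exp_neg_div_add_pow_add hx 1
  have h := integral_mul_exp_neg_div_add_pow_succ hx 2
  simp only [pow_one, Nat.cast_zero, Nat.cast_one, zero_add, one_mul] at hibp₁ hibp₂ h
  norm_num at hibp₂ h
  rw [integral_exp_neg_div_add hx] at hibp₁
  rw [h, eq_div_iff (by positivity)]
  field_simp at hibp₁ hibp₂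
  linear_combination (2 + x) * hibp₁ - (1 + x) * hibp₂

lemma integrableOn_ofReal_mul_exp_neg :
    IntegrableOn (fun t : ℝ => ((t * exp (-t) : ℝ) : ℂ)) (Ioi 0) := by
  have h := Real.GammaIntegral_convergent two_pos
  norm_num at h
  exact (h.congr_fun (fun t _ => mul_comm _ _) measurableSet_Ioi).ofReal

lemma stieltjesSq_eq_re :
    stieltjesSq = fun x : ℝ => (∫ t in Ioi 0, ((t * exp (-t) : ℝ) : ℂ) / (x + t) ^ 2).re := by
  funext x
  rw [← Complex.ofReal_re (stieltjesSq x)]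
  congr 1
  exact (integral_ofReal (𝕜 := ℂ)).symm.trans
    (setIntegral_congr_fun measurableSet_Ioi fun t _ => by norm_cast)

lemma hasDerivAt_stieltjesSq {x : ℝ} (hx : 0 < x) :
    HasDerivAt stieltjesSq ((x * (2 + x) * stieltjesSq x - 1) / (x * (1 + x))) x := by
  have h := (hasDerivAt_integral_div_add_pow integrableOn_ofReal_mul_exp_neg 2
    (z := x) (by simpa using hx)).real_of_complex
  have hval : (∫ t in Ioi 0, -(((2 : ℕ) : ℂ) * ((t * exp (-t) : ℝ) : ℂ) / (x + t) ^ (2 + 1))) =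
      ((-(2 * ∫ t in Ioi 0, t * exp (-t) / (x + t) ^ 3) : ℝ) : ℂ) := by
    have hJ : ((∫ t in Ioi 0, t * exp (-t) / (x + t) ^ 3 : ℝ) : ℂ) =
        ∫ t in Ioi 0, ((t * exp (-t) / (x + t) ^ 3 : ℝ) : ℂ) := integral_ofReal.symm
    rw [Complex.ofReal_neg, Complex.ofReal_mul, hJ, ← integral_const_mul, ← integral_neg]
    refine setIntegral_congr_fun measurableSet_Ioi fun t _ => ?_
    push_cast
    ring
  rw [← stieltjesSq_eq_re, hval, Complex.ofReal_re, integral_mul_exp_neg_div_add_pow_three hx] at h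
  convert h using 1
  field_simp
  ring

lemma analyticAt_stieltjesSq {x : ℝ} (hx : 0 < x) : AnalyticAt ℝ stieltjesSq x := by
  have hdiff : DifferentiableOn ℂ
      (fun z : ℂ => ∫ t in Ioi 0, ((t * exp (-t) : ℝ) : ℂ) / (z + t) ^ 2) {z | 0 < z.re} :=
    fun z hz => (hasDerivAt_integral_div_add_pow integrableOn_ofReal_mul_exp_neg 2 hz)
      |>.differentiableAt.differentiableWithinAt
  have hΦ := (hdiff.analyticAt ((isOpen_lt continuous_const Complex.continuous_re).mem_nhds
    (show 0 < (x : ℂ).re by simpa using hx))).restrictScalars (𝕜 := ℝ)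
  rw [stieltjesSq_eq_re]
  exact Complex.reCLM.analyticAt _ |>.comp hΦ |>.comp (Complex.ofRealCLM.analyticAt x)

lemma integral_mul_exp_neg_div_add_pow_pos {x : ℝ} (hx : 0 < x) {n : ℕ} (hn : 1 ≤ n) :
    0 < ∫ t in Ioi 0, t * exp (-t) / (x + t) ^ n := by
  rw [setIntegral_pos_iff_support_of_nonneg_ae ?_ (integrableOn_mul_exp_neg_div_add_pow hx hn)]
  · have hsupp : Ioi 0 ⊆ Function.support fun t => t * exp (-t) / (x + t) ^ n :=
      fun t (ht : 0 < t) => Function.mem_support.2 (by positivity)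
    rw [inter_eq_self_of_subset_right hsupp, volume_Ioi]
    simp
  · filter_upwards [ae_restrict_mem measurableSet_Ioi] with t (ht : 0 < t)
    positivity

lemma mul_two_add_mul_stieltjesSq_lt_one {x : ℝ} (hx : 0 < x) :
    x * (2 + x) * stieltjesSq x < 1 := by
  have hpos := integral_mul_exp_neg_div_add_pow_pos hx (n := 3) (by norm_num)
  rw [integral_mul_exp_neg_div_add_pow_three hx] at hpos
  linarith [(div_pos_iff_of_pos_right (by positivity)).1 hpos]

lemma strictAntiOn_stieltjesSq : StrictAntiOn stieltjesSq (Ioi 0) := by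
  refine strictAntiOn_of_deriv_neg (convex_Ioi 0)
    (fun x hx => (analyticAt_stieltjesSq hx).continuousAt.continuousWithinAt) fun x hx => ?_
  replace hx : 0 < x := by rwa [interior_Ioi] at hx
  rw [(hasDerivAt_stieltjesSq hx).deriv]
  exact div_neg_of_neg_of_pos (by linarith [mul_two_add_mul_stieltjesSq_lt_one hx])
    (by positivity)

lemma mul_stieltjesSq_le {x : ℝ} (hx : 0 < x) : x * stieltjesSq x ≤ 1 / 4 := by
  rw [stieltjesSq, ← integral_const_mul, ← integral_exp_neg_Ioi_zero, ← integral_div]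
  refine setIntegral_mono_on ?_ ((integrableOn_exp_neg_Ioi 0).div_const 4) measurableSet_Ioi
    fun t (ht : 0 < t) => ?_
  · exact (integrableOn_mul_exp_neg_div_add_pow hx (n := 2) (by norm_num)).const_mul x
  · rw [mul_div_assoc', div_le_div_iff₀ (by positivity) (by norm_num)]
    nlinarith [mul_nonneg (exp_pos (-t)).le (sq_nonneg (x - t))]

lemma Hfun_ofReal_neg (α : ℝ) {x : ℝ} (hx : 0 < x) :
    Hfun α ((-x : ℝ) : ℂ) = ((-x + α - α * ((1 - x * stieltjesSq x) / (1 + x)) : ℝ) : ℂ) := by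
  have hJ : ((∫ t in Ioi 0, t * exp (-t) / (x + t) : ℝ) : ℂ) =
      ∫ t in Ioi 0, ((t * exp (-t) / (x + t) : ℝ) : ℂ) := integral_ofReal.symm
  have hint : ∫ t in Ioi 0, ((t * exp (-t) : ℝ) : ℂ) / (((-x : ℝ) : ℂ) - t) =
      -((∫ t in Ioi 0, t * exp (-t) / (x + t) : ℝ) : ℂ) := by
    rw [hJ, ← integral_neg]
    refine setIntegral_congr_fun measurableSet_Ioi fun t _ => ?_
    rw [Complex.ofReal_neg, ← neg_add', div_neg]
    norm_cast
  rw [Hfun, hint, integral_mul_exp_neg_div_add hx]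
  push_cast
  ring

def IsStieltjesSqInverse (c : ℝ → ℝ) : Prop :=
  ∀ α, 0 < α → 0 < c α ∧ stieltjesSq (c α) = 1 / α

noncomputable def sFormula (c : ℝ → ℝ) (α : ℝ) : ℝ := c α * (α - c α) / (1 + c α)

namespace IsStieltjesSqInverse

variable {c : ℝ → ℝ} {α : ℝ}

lemma sub_two_mul_sub_sq_pos (hc : IsStieltjesSqInverse c) (hα : 0 < α) :
    0 < α - 2 * c α - c α ^ 2 := by
  obtain ⟨hcα, hG⟩ := hc α hα
  have h := mul_two_add_mul_stieltjesSq_lt_one hcα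
  rw [hG, mul_one_div, div_lt_one hα] at h
  linarith

lemma le_div_four (hc : IsStieltjesSqInverse c) (hα : 0 < α) : c α ≤ α / 4 := by
  obtain ⟨hcα, hG⟩ := hc α hα
  have h := mul_stieltjesSq_le hcα
  rw [hG, mul_one_div, div_le_div_iff₀ hα (by norm_num)] at h
  linarith

lemma eventually_one_le (hc : IsStieltjesSqInverse c) : ∀ᶠ α in atTop, 1 ≤ c α := by
  have hG1 : 0 < stieltjesSq 1 := integral_mul_exp_neg_div_add_pow_pos one_pos (by norm_num)
  filter_upwards [eventually_gt_atTop (stieltjesSq 1)⁻¹] with α hα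
  have hα0 : 0 < α := (inv_pos.2 hG1).trans hα
  obtain ⟨hcα, hG⟩ := hc α hα0
  by_contra! hlt
  have := strictAntiOn_stieltjesSq (mem_Ioi.2 hcα) (mem_Ioi.2 one_pos) hlt
  rw [hG, one_div, lt_inv_comm₀ hG1 hα0] at this
  linarith

lemma eventually_inv_stieltjesSq_eq (hc : IsStieltjesSqInverse c) (hα : 0 < α) :
    ∀ᶠ β in 𝓝 α, 0 < c β ∧ (stieltjesSq (c β))⁻¹ = β := by
  filter_upwards [Ioi_mem_nhds hα] with β (hβ : 0 < β)
  obtain ⟨hcβ, hG⟩ := hc β hβ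
  exact ⟨hcβ, by rw [hG, one_div, inv_inv]⟩

lemma hasDerivAt_inv_stieltjesSq (hc : IsStieltjesSqInverse c) (hα : 0 < α) :
    HasDerivAt (fun x => (stieltjesSq x)⁻¹)
      (α * (α - 2 * c α - c α ^ 2) / (c α * (1 + c α))) (c α) := by
  obtain ⟨hcα, hG⟩ := hc α hα
  have hG0 : stieltjesSq (c α) ≠ 0 := by rw [hG]; positivity
  refine ((hasDerivAt_stieltjesSq hcα).inv hG0).congr_deriv ?_
  rw [hG]
  field_simp
  ring

lemma analyticAt (hc : IsStieltjesSqInverse c) (hα : 0 < α) : AnalyticAt ℝ c α := by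
  obtain ⟨hcα, hG⟩ := hc α hα
  have hG0 : stieltjesSq (c α) ≠ 0 := by rw [hG]; positivity
  have hD := hc.sub_two_mul_sub_sq_pos hα
  have hev := hc.eventually_inv_stieltjesSq_eq hα
  refine AnalyticAt.of_local_left_inverse ((analyticAt_stieltjesSq hcα).inv hG0)
    ((hc.hasDerivAt_inv_stieltjesSq hα).deriv ▸ (by positivity)) (Ioi_mem_nhds hcα)
    (inv_injective.comp_injOn strictAntiOn_stieltjesSq.injOn) ?_ ?_
  · filter_upwards [hev] with β hβ using hβ.1
  · filter_upwards [hev] with β hβ using hβ.2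

lemma hasDerivAt (hc : IsStieltjesSqInverse c) (hα : 0 < α) :
    HasDerivAt c (c α * (1 + c α) / (α * (α - 2 * c α - c α ^ 2))) α := by
  have hD := hc.sub_two_mul_sub_sq_pos hα
  have hcα := (hc α hα).1
  rw [← inv_div]
  refine HasDerivAt.of_local_left_inverse (hc.analyticAt hα).continuousAt
    (hc.hasDerivAt_inv_stieltjesSq hα) (by positivity) ?_
  filter_upwards [hc.eventually_inv_stieltjesSq_eq hα] with β hβ using hβ.2

lemma analyticAt_sFormula (hc : IsStieltjesSqInverse c) (hα : 0 < α) :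
    AnalyticAt ℝ (sFormula c) α := by
  have hcα := hc.analyticAt hα
  exact (hcα.mul (analyticAt_id.sub hcα)).div (analyticAt_const.add hcα)
    (by linarith [(hc α hα).1])

lemma hasDerivAt_sFormula (hc : IsStieltjesSqInverse c) (hα : 0 < α) :
    HasDerivAt (sFormula c) (c α * (α + 1) / (α * (1 + c α))) α := by
  have hcα := (hc α hα).1
  have hD := hc.sub_two_mul_sub_sq_pos hα
  have hd := hc.hasDerivAt hα
  have h := (hd.fun_mul ((hasDerivAt_id' α).fun_sub hd)).fun_div (hd.const_add 1) (by positivity)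
  refine h.congr_deriv ?_
  field_simp
  linear_combination mul_inv_cancel₀ hD.ne'

lemma strictMonoOn_sFormula (hc : IsStieltjesSqInverse c) : StrictMonoOn (sFormula c) (Ioi 0) := by
  refine strictMonoOn_of_deriv_pos (convex_Ioi 0)
    (fun α hα => (hc.analyticAt_sFormula hα).continuousAt.continuousWithinAt) fun α hα => ?_
  replace hα : 0 < α := by rwa [interior_Ioi] at hα
  have hcα := (hc α hα).1
  rw [(hc.hasDerivAt_sFormula hα).deriv]
  positivity

lemma sFormula_mem_Icc (hc : IsStieltjesSqInverse c) (hα : 0 < α) :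
    sFormula c α ∈ Icc 0 (α ^ 2 / 4) := by
  have hcα := (hc α hα).1
  have hle := hc.le_div_four hα
  refine ⟨div_nonneg (mul_nonneg hcα.le (by linarith)) (by linarith), ?_⟩
  rw [sFormula, div_le_iff₀ (by linarith)]
  nlinarith [mul_nonneg hcα.le hα.le]

lemma tendsto_sFormula_zero (hc : IsStieltjesSqInverse c) :
    Tendsto (sFormula c) (𝓝[>] 0) (𝓝 0) := by
  have hsq : Tendsto (fun α : ℝ => α ^ 2 / 4) (𝓝[>] 0) (𝓝 0) := by
    simpa using (((continuous_pow 2).div_const 4).tendsto (0 : ℝ)).mono_left nhdsWithin_le_nhds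
  refine tendsto_of_tendsto_of_tendsto_of_le_of_le' tendsto_const_nhds hsq ?_ ?_ <;>
    filter_upwards [self_mem_nhdsWithin] with α (hα : 0 < α)
  exacts [(hc.sFormula_mem_Icc hα).1, (hc.sFormula_mem_Icc hα).2]

lemma tendsto_sFormula_atTop (hc : IsStieltjesSqInverse c) : Tendsto (sFormula c) atTop atTop := by
  refine tendsto_atTop_mono' atTop ?_
    (tendsto_id.const_mul_atTop (show (0 : ℝ) < 3 / 8 by norm_num))
  filter_upwards [hc.eventually_one_le, eventually_gt_atTop 0] with α h1 hα
  have hle := hc.le_div_four hα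
  rw [id, sFormula, le_div_iff₀ (by linarith)]
  nlinarith [mul_le_mul_of_nonneg_left hle (zero_le_one.trans h1),
    mul_nonneg (sub_nonneg.2 h1) hα.le]

lemma Hfun_eq_sFormula (hc : IsStieltjesSqInverse c) (hα : 0 < α) :
    Hfun α ((-(c α) : ℝ) : ℂ) = (sFormula c α : ℂ) := by
  obtain ⟨hcα, hG⟩ := hc α hα
  rw [Hfun_ofReal_neg α hcα, hG, sFormula]
  congr 1
  field_simp
  ring

end IsStieltjesSqInverse

/-- `α ↦ c_α` and `α ↦ s_α` are real-analytic on `(0,∞)` with the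
stated derivatives; `s` is strictly increasing, `s_α → 0` as `α → 0` and
`s_α → ∞` as `α → ∞`. -/
theorem free_gamma_c_s_analytic_derivatives
    (c : ℝ → ℝ) (s : ℝ → ℝ)
    (hc : ∀ α : ℝ, 0 < α → 0 < c α ∧
      (∫ t in Set.Ioi (0:ℝ), t * Real.exp (-t) / (c α + t)^2) = 1/α)
    (hs : ∀ α : ℝ, 0 < α → ((s α : ℝ) : ℂ) = Hfun α ((-(c α) : ℝ) : ℂ)) :
    (∀ α : ℝ, 0 < α →
      AnalyticAt ℝ c α ∧ AnalyticAt ℝ s α ∧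
      deriv c α = c α * (1 + c α) / (α * (α - 2 * c α - (c α)^2)) ∧
      deriv s α = c α * (α + 1) / (α * (1 + c α))) ∧
    StrictMonoOn s (Set.Ioi 0) ∧
    Filter.Tendsto s (nhdsWithin 0 (Set.Ioi 0)) (nhds 0) ∧
    Filter.Tendsto s Filter.atTop Filter.atTop := by
  have hc' : IsStieltjesSqInverse c := hc
  have hs' : EqOn s (sFormula c) (Ioi 0) := fun α hα =>
    Complex.ofReal_injective ((hs α hα).trans (hc'.Hfun_eq_sFormula hα))
  have hs_nhds : ∀ α, 0 < α → s =ᶠ[𝓝 α] sFormula c := fun α hα =>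
    hs'.eventuallyEq_of_mem (Ioi_mem_nhds hα)
  refine ⟨fun α hα => ⟨hc'.analyticAt hα, (hc'.analyticAt_sFormula hα).congr (hs_nhds α hα).symm,
      (hc'.hasDerivAt hα).deriv,
      ((hc'.hasDerivAt_sFormula hα).congr_of_eventuallyEq (hs_nhds α hα)).deriv⟩,
    hc'.strictMonoOn_sFormula.congr hs'.symm,
    hc'.tendsto_sFormula_zero.congr' (eventuallyEq_nhdsWithin_of_eqOn hs').symm,
    hc'.tendsto_sFormula_atTop.congr' ?_⟩
  filter_upwards [eventually_gt_atTop 0] with α hα using (hs' hα).symm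
end
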